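/- Let n ≥ 3 be an odd integer and m ≥ 4 an even integer. Then the corona graph P_n ∘ C_m admits an edge labeling f* : E(P_n ∘ C_m) → {0,1} whose induced vertex labeling f satisfies e_f(0) = (2nm + n − 3)/2, e_f(1) = (2nm + n + 1)/2, v_f(0) = (n + nm + 1)/2, and v_f(1) = (n + nm − 1)/2. In particular |(v_f(0) + e_f(0)) − (v_f(1) + e_f(1))| ≤ 1, so P_n ∘ C_m is total edge product cordial for odd n ≥ 3 and even m ≥ 4. -/

import Mathlib

open scoped Classical
open Finset SimpleGraph

/-- Adjacency relation of the corona product `G ∘ H`: take one copy of `G` and,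
for each vertex `i` of `G`, a copy of `H` (indexed by `i`), joining `i` to every
vertex of its copy of `H`. -/
def coronaAdj {α β : Type*} (G : SimpleGraph α) (H : SimpleGraph β) :
    α ⊕ α × β → α ⊕ α × β → Prop
  | Sum.inl u, Sum.inl v => G.Adj u v
  | Sum.inl u, Sum.inr (i, _) => u = i
  | Sum.inr (i, _), Sum.inl u => u = i
  | Sum.inr (i, x), Sum.inr (j, y) => i = j ∧ H.Adj x y

/-- The corona product `G ∘ H` of two simple graphs. -/
def corona {α β : Type*} (G : SimpleGraph α) (H : SimpleGraph β) :
    SimpleGraph (α ⊕ α × β) where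
  Adj := coronaAdj G H
  symm := ⟨by
    rintro (u | ⟨i, x⟩) (v | ⟨j, y⟩) h <;>
      simp only [coronaAdj] at h ⊢
    · exact h.symm
    · exact h
    · exact h
    · exact ⟨h.1.symm, h.2.symm⟩⟩
  loopless := ⟨by
    rintro (u | ⟨i, x⟩) h <;> simp only [coronaAdj] at h
    · exact G.irrefl h
    · exact H.irrefl h.2⟩

/-- The vertex labeling induced by an edge labeling `f`: the label of `v` is the
product of the labels of the edges incident to `v` (an empty product is `1`). -/
noncomputable def inducedLabel {α : Type*} [Fintype α] (G : SimpleGraph α)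
    (f : Sym2 α → ℕ) (v : α) : ℕ :=
  ∏ u ∈ Finset.univ.filter (fun u => G.Adj v u), f s(v, u)

/-- `eCount G f i` is the number of edges of `G` labeled `i` by `f`. -/
noncomputable def eCount {α : Type*} [Fintype α] (G : SimpleGraph α)
    (f : Sym2 α → ℕ) (i : ℕ) : ℕ :=
  (G.edgeFinset.filter (fun e => f e = i)).card

/-- `vCount G f i` is the number of vertices of `G` whose induced label is `i`. -/
noncomputable def vCount {α : Type*} [Fintype α] (G : SimpleGraph α)
    (f : Sym2 α → ℕ) (i : ℕ) : ℕ :=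
  (Finset.univ.filter (fun v => inducedLabel G f v = i)).card

/-- `f` is a total edge product cordial labeling of `G`: it labels every edge `0` or `1`,
and `|(v_f(0) + e_f(0)) - (v_f(1) + e_f(1))| ≤ 1`. -/
def IsTotalEdgeProductCordialLabeling {α : Type*} [Fintype α] (G : SimpleGraph α)
    (f : Sym2 α → ℕ) : Prop :=
  (∀ e ∈ G.edgeSet, f e = 0 ∨ f e = 1) ∧
  |((vCount G f 0 : ℤ) + (eCount G f 0 : ℤ)) - ((vCount G f 1 : ℤ) + (eCount G f 1 : ℤ))| ≤ 1

/-- `G` is total edge product cordial if it admits a total edge product cordial labeling. -/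
def IsTotalEdgeProductCordial {α : Type*} [Fintype α] (G : SimpleGraph α) : Prop :=
  ∃ f : Sym2 α → ℕ, IsTotalEdgeProductCordialLabeling G f

/-! Write `n = 2q + 1` and `m = 2r`. Let `Z` consist of the path vertices `0, …, q` and of the
first `qm + r` vertices of the cycle copies in lexicographic order (the copies at `0, …, q - 1`
and half of the copy at `q`), and label an edge `0` exactly when both of its ends lie in `Z`.
Every vertex of `Z` has a neighbour in `Z`, so the vertices labeled `0` are exactly those of
`Z`, while the edges labeled `0` are those of the subgraph induced on `Z`. Both edge counts are
obtained from the handshake lemma by counting ordered adjacent pairs, which split over the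
blocks of the corona: path edges, spokes, and edges inside the copies of the cycle. -/

theorem card_filter_eq_zero_add_card_filter_eq_one {ι : Type*} (s : Finset ι) (g : ι → ℕ)
    (hg : ∀ x ∈ s, g x = 0 ∨ g x = 1) : #{x ∈ s | g x = 0} + #{x ∈ s | g x = 1} = #s := by
  rw [← card_filter_add_card_filter_not (s := s) (fun x => g x = 0)]
  congr 1
  refine congrArg card (filter_congr fun x hx => ?_)
  have := hg x hx
  omega

section Labeling

variable {V : Type*}

noncomputable def insideLabeling (S : Set V) (e : Sym2 V) : ℕ :=
  if e ∈ S.sym2 then 0 else 1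

theorem insideLabeling_eq_zero_iff {S : Set V} {e : Sym2 V} :
    insideLabeling S e = 0 ↔ e ∈ S.sym2 := by
  unfold insideLabeling
  split_ifs with h <;> simp [h]

theorem insideLabeling_eq_zero_or_one (S : Set V) (e : Sym2 V) :
    insideLabeling S e = 0 ∨ insideLabeling S e = 1 := by
  unfold insideLabeling
  split_ifs <;> simp

variable [Fintype V]

theorem inducedLabel_eq_zero_or_one (G : SimpleGraph V) {f : Sym2 V → ℕ}
    (hf : ∀ e ∈ G.edgeSet, f e = 0 ∨ f e = 1) (v : V) :
    inducedLabel G f v = 0 ∨ inducedLabel G f v = 1 := by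
  by_cases h : ∃ u, G.Adj v u ∧ f s(v, u) = 0
  · obtain ⟨u, hvu, hu⟩ := h
    exact Or.inl (prod_eq_zero (by simpa using hvu) hu)
  · push Not at h
    refine Or.inr (prod_eq_one fun u hu => ?_)
    have hvu : G.Adj v u := by simpa using hu
    exact (hf _ hvu).resolve_left (h u hvu)

theorem eCount_zero_add_eCount_one (G : SimpleGraph V) {f : Sym2 V → ℕ}
    (hf : ∀ e ∈ G.edgeSet, f e = 0 ∨ f e = 1) :
    eCount G f 0 + eCount G f 1 = #G.edgeFinset :=
  card_filter_eq_zero_add_card_filter_eq_one _ _ fun e he => hf e (by simpa using he)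

theorem vCount_zero_add_vCount_one (G : SimpleGraph V) {f : Sym2 V → ℕ}
    (hf : ∀ e ∈ G.edgeSet, f e = 0 ∨ f e = 1) :
    vCount G f 0 + vCount G f 1 = Fintype.card V :=
  card_filter_eq_zero_add_card_filter_eq_one _ _ fun v _ => inducedLabel_eq_zero_or_one G hf v

theorem inducedLabel_insideLabeling_eq_zero_iff (G : SimpleGraph V) (S : Set V) (v : V) :
    inducedLabel G (insideLabeling S) v = 0 ↔ v ∈ S ∧ ∃ u ∈ S, G.Adj v u := by
  simp only [inducedLabel, prod_eq_zero_iff, mem_filter, mem_univ, true_and,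
    insideLabeling_eq_zero_iff, Set.mk_mem_sym2_iff]
  constructor
  · rintro ⟨u, huv, hv, hu⟩
    exact ⟨hv, u, hu, huv⟩
  · rintro ⟨hv, u, hu, huv⟩
    exact ⟨u, huv, hv, hu⟩

theorem eCount_insideLabeling_zero (G : SimpleGraph V) (S : Set V) :
    eCount G (insideLabeling S) 0 = #{e ∈ G.edgeFinset | e ∈ S.sym2} := by
  simp only [eCount, insideLabeling_eq_zero_iff]

theorem vCount_insideLabeling_zero (G : SimpleGraph V) {S : Set V}
    (hS : ∀ v ∈ S, ∃ u ∈ S, G.Adj v u) :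
    vCount G (insideLabeling S) 0 = #{v | v ∈ S} := by
  unfold vCount
  congr 1
  refine filter_congr fun v _ => ?_
  rw [inducedLabel_insideLabeling_eq_zero_iff]
  exact ⟨And.left, fun hv => ⟨hv, hS v hv⟩⟩

end Labeling

section Handshake

variable {V : Type*} [Fintype V]

theorem card_adj_pairs_eq_sum_degree (G : SimpleGraph V) [DecidableRel G.Adj] :
    #{p : V × V | G.Adj p.1 p.2} = ∑ v, G.degree v := by
  rw [card_filter, Fintype.sum_prod_type]
  refine sum_congr rfl fun v _ => ?_
  rw [← card_neighborFinset_eq_degree, ← card_filter]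
  congr 1
  ext u
  simp

theorem two_mul_card_edgeFinset_eq_card_adj_pairs (G : SimpleGraph V) [DecidableRel G.Adj] :
    2 * #G.edgeFinset = #{p : V × V | G.Adj p.1 p.2} := by
  rw [card_adj_pairs_eq_sum_degree, sum_degrees_eq_twice_card_edges]

theorem two_mul_card_edgeFinset_sym2_eq_card_adj_pairs (G : SimpleGraph V) [DecidableRel G.Adj]
    (S : Set V) :
    2 * #{e ∈ G.edgeFinset | e ∈ S.sym2} = #{p : V × V | G.Adj p.1 p.2 ∧ p.1 ∈ S ∧ p.2 ∈ S} := by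
  convert two_mul_card_edgeFinset_eq_card_adj_pairs (G ⊓ fromEdgeSet S.sym2) using 3
  · ext e
    simp only [mem_filter, mem_edgeFinset, edgeSet_inf, edgeSet_fromEdgeSet, Set.mem_inter_iff,
      Set.mem_sdiff]
    exact ⟨fun ⟨he, hS⟩ => ⟨he, hS, G.not_isDiag_of_mem_edgeSet he⟩, fun ⟨he, hS, _⟩ => ⟨he, hS⟩⟩
  · simp only [inf_adj, fromEdgeSet_adj, Set.mk_mem_sym2_iff]
    exact ⟨fun ⟨h, hS⟩ => ⟨h, hS, h.ne⟩, fun ⟨h, hS, _⟩ => ⟨h, hS⟩⟩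

end Handshake

section Corona

variable {α β : Type*}

@[simp] theorem corona_adj_inl_inl (G : SimpleGraph α) (H : SimpleGraph β) (u v : α) :
    (corona G H).Adj (Sum.inl u) (Sum.inl v) ↔ G.Adj u v := Iff.rfl

@[simp] theorem corona_adj_inl_inr (G : SimpleGraph α) (H : SimpleGraph β) (u : α) (w : α × β) :
    (corona G H).Adj (Sum.inl u) (Sum.inr w) ↔ u = w.1 := Iff.rfl

@[simp] theorem corona_adj_inr_inl (G : SimpleGraph α) (H : SimpleGraph β) (w : α × β) (u : α) :
    (corona G H).Adj (Sum.inr w) (Sum.inl u) ↔ u = w.1 := Iff.rfl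

@[simp] theorem corona_adj_inr_inr (G : SimpleGraph α) (H : SimpleGraph β) (w w' : α × β) :
    (corona G H).Adj (Sum.inr w) (Sum.inr w') ↔ w.1 = w'.1 ∧ H.Adj w.2 w'.2 := Iff.rfl

variable [Fintype α] [Fintype β]

theorem card_corona_adj_pairs (G : SimpleGraph α) (H : SimpleGraph β) (S : Set (α ⊕ α × β)) :
    #{p : (α ⊕ α × β) × (α ⊕ α × β) | (corona G H).Adj p.1 p.2 ∧ p.1 ∈ S ∧ p.2 ∈ S} =
      #{p : α × α | G.Adj p.1 p.2 ∧ Sum.inl p.1 ∈ S ∧ Sum.inl p.2 ∈ S} +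
      2 * #{w : α × β | Sum.inl w.1 ∈ S ∧ Sum.inr w ∈ S} +
      ∑ i, #{p : β × β | H.Adj p.1 p.2 ∧ Sum.inr (i, p.1) ∈ S ∧ Sum.inr (i, p.2) ∈ S} := by
  simp only [card_filter, Fintype.sum_prod_type, Fintype.sum_sum_type, corona_adj_inl_inl,
    corona_adj_inl_inr, corona_adj_inr_inl, corona_adj_inr_inr, ite_and, sum_ite_irrel,
    sum_const_zero, sum_ite_eq, sum_ite_eq', mem_univ, if_true]
  simp only [← ite_and, ite_sum_zero, sum_add_distrib, and_comm]
  ring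

end Corona

theorem Fin.sum_eq_of_lt_of_eq_of_gt {n q : ℕ} (hq : q < n) (f : Fin n → ℕ) {a b : ℕ}
    (hlt : ∀ i : Fin n, i.val < q → f i = a) (heq : f ⟨q, hq⟩ = b)
    (hgt : ∀ i : Fin n, q < i.val → f i = 0) : ∑ i, f i = q * a + b := by
  have hf : ∀ i : Fin n, f i = (if i.val < q then a else 0) + if i = ⟨q, hq⟩ then b else 0 := by
    intro i
    rcases lt_trichotomy i.val q with h | h | h
    · rw [hlt i h, if_pos h, if_neg (by simp only [Fin.ext_iff]; omega), add_zero]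
    · obtain rfl : i = ⟨q, hq⟩ := Fin.ext h
      rw [heq, if_neg (lt_irrefl _), if_pos rfl, zero_add]
    · rw [hgt i h, if_neg (by omega), if_neg (by simp only [Fin.ext_iff]; omega)]
  simp only [hf, sum_add_distrib, sum_ite_eq', mem_univ, if_true, ← sum_filter]
  rw [Finset.sum_const, Fin.card_filter_val_lt, smul_eq_mul, min_eq_right hq.le]

theorem card_succ_pairs_lt {n K : ℕ} (hK : K ≤ n) :
    #{p : Fin n × Fin n | p.1.val + 1 = p.2.val ∧ p.2.val < K} = K - 1 := by
  have hcard : #{x : Fin n | x < K - 1} = K - 1 := by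
    rw [Fin.card_filter_val_lt]
    omega
  rw [← hcard]
  refine card_bij (fun p _ => p.1) ?_ ?_ ?_
  · intro p hp
    simp only [mem_filter, mem_univ, true_and] at hp ⊢
    omega
  · intro p hp p' hp' h
    simp only [mem_filter, mem_univ, true_and] at hp hp'
    ext <;> omega
  · intro x hx
    simp only [mem_filter, mem_univ, true_and] at hx
    exact ⟨(x, ⟨x + 1, by omega⟩), by simp only [mem_filter, mem_univ, true_and]; omega, rfl⟩

theorem card_pathGraph_adj_pairs_lt {n K : ℕ} (hK : K ≤ n) :
    #{p : Fin n × Fin n | (pathGraph n).Adj p.1 p.2 ∧ p.1.val < K ∧ p.2.val < K} = 2 * (K - 1) := by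
  have hsplit : #{p : Fin n × Fin n | (pathGraph n).Adj p.1 p.2 ∧ p.1.val < K ∧ p.2.val < K} =
      #{p : Fin n × Fin n | (p.1.val + 1 = p.2.val ∧ p.2.val < K) ∨
        (p.2.val + 1 = p.1.val ∧ p.1.val < K)} := by
    congr 1
    refine filter_congr fun p _ => ?_
    rw [pathGraph_adj]
    omega
  have hswap : #{p : Fin n × Fin n | p.2.val + 1 = p.1.val ∧ p.1.val < K} =
      #{p : Fin n × Fin n | p.1.val + 1 = p.2.val ∧ p.2.val < K} :=
    card_equiv (Equiv.prodComm _ _) (by simp)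
  rw [hsplit, filter_or, card_union_of_disjoint, hswap, card_succ_pairs_lt hK]
  · omega
  · rw [disjoint_filter]
    intro p _ h
    omega

theorem card_pathGraph_adj_pairs {n : ℕ} :
    #{p : Fin n × Fin n | (pathGraph n).Adj p.1 p.2} = 2 * (n - 1) := by
  simpa using card_pathGraph_adj_pairs_lt (le_refl n)

theorem Fin.val_eq_add_one_of_sub_val_eq_one {m : ℕ} {x y : Fin m} (hx : x.val + 1 < m)
    (h : (y - x).val = 1) : y.val = x.val + 1 := by
  rcases le_or_gt x y with hxy | hxy
  · rw [Fin.sub_val_of_le hxy] at h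
    omega
  · rw [Fin.coe_sub_iff_lt.2 hxy] at h
    omega

theorem cycleGraph_adj_iff_pathGraph_adj_of_lt {m : ℕ} {x y : Fin m} (hx : x.val + 1 < m)
    (hy : y.val + 1 < m) : (cycleGraph m).Adj x y ↔ (pathGraph m).Adj x y := by
  refine ⟨fun h => ?_, fun h => pathGraph_le_cycleGraph h⟩
  rw [cycleGraph_adj'] at h
  rw [pathGraph_adj]
  rcases h with h | h
  · exact Or.inr (Fin.val_eq_add_one_of_sub_val_eq_one hy h).symm
  · exact Or.inl (Fin.val_eq_add_one_of_sub_val_eq_one hx h).symm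

theorem card_cycleGraph_adj_pairs_lt {m K : ℕ} (hK : K < m) :
    #{p : Fin m × Fin m | (cycleGraph m).Adj p.1 p.2 ∧ p.1.val < K ∧ p.2.val < K} =
      2 * (K - 1) := by
  rw [← card_pathGraph_adj_pairs_lt hK.le]
  congr 1
  refine filter_congr fun p _ => ?_
  constructor
  · rintro ⟨h, h1, h2⟩
    exact ⟨(cycleGraph_adj_iff_pathGraph_adj_of_lt (by omega) (by omega)).1 h, h1, h2⟩
  · rintro ⟨h, h1, h2⟩
    exact ⟨(cycleGraph_adj_iff_pathGraph_adj_of_lt (by omega) (by omega)).2 h, h1, h2⟩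

theorem card_cycleGraph_adj_pairs {m : ℕ} (hm : 3 ≤ m) :
    #{p : Fin m × Fin m | (cycleGraph m).Adj p.1 p.2} = 2 * m := by
  obtain ⟨k, rfl⟩ := Nat.exists_eq_add_of_le' hm
  rw [card_adj_pairs_eq_sum_degree]
  simp [cycleGraph_degree_three_le, mul_comm]

section CoronaPathCycle

variable {n m : ℕ}

def coronaZeroSet (q r : ℕ) : Set (Fin n ⊕ Fin n × Fin m) :=
  Sum.elim (fun i => i.val < q + 1) (fun w => w.1.val < q ∨ w.1.val = q ∧ w.2.val < r)

@[simp] theorem inl_mem_coronaZeroSet {q r : ℕ} {i : Fin n} :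
    (Sum.inl i : Fin n ⊕ Fin n × Fin m) ∈ coronaZeroSet q r ↔ i.val < q + 1 := Iff.rfl

@[simp] theorem inr_mem_coronaZeroSet {q r : ℕ} {w : Fin n × Fin m} :
    (Sum.inr w : Fin n ⊕ Fin n × Fin m) ∈ coronaZeroSet q r ↔
      w.1.val < q ∨ w.1.val = q ∧ w.2.val < r := Iff.rfl

theorem exists_adj_of_mem_coronaZeroSet {q r : ℕ} (hr : 0 < r) (hrm : r ≤ m)
    (G : SimpleGraph (Fin n)) (H : SimpleGraph (Fin m)) :
    ∀ v ∈ coronaZeroSet q r, ∃ u ∈ coronaZeroSet q r, (corona G H).Adj v u := by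
  rintro (i | ⟨i, x⟩) hv <;> simp only [inl_mem_coronaZeroSet, inr_mem_coronaZeroSet] at hv
  · refine ⟨Sum.inr (i, ⟨0, by omega⟩), ?_, rfl⟩
    simp only [inr_mem_coronaZeroSet]
    omega
  · exact ⟨Sum.inl i, by simp only [inl_mem_coronaZeroSet]; omega, rfl⟩

theorem card_inr_mem_coronaZeroSet {q r : ℕ} (hq : q < n) (hr : r ≤ m) :
    #{w : Fin n × Fin m | Sum.inr w ∈ coronaZeroSet q r} = q * m + r := by
  rw [card_filter, Fintype.sum_prod_type]
  refine Fin.sum_eq_of_lt_of_eq_of_gt hq _ (fun i hi => ?_) ?_ (fun i hi => ?_)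
  · simp [hi]
  · simp [Fin.card_filter_val_lt, hr]
  · simp only [inr_mem_coronaZeroSet]
    exact sum_eq_zero fun x _ => if_neg (by omega)

theorem card_coronaZeroSet {q r : ℕ} (hq : q < n) (hr : r ≤ m) :
    #{v | v ∈ (coronaZeroSet q r : Set (Fin n ⊕ Fin n × Fin m))} = q + 1 + (q * m + r) := by
  rw [card_filter, Fintype.sum_sum_type, ← card_filter, ← card_filter,
    card_inr_mem_coronaZeroSet hq hr]
  simp only [inl_mem_coronaZeroSet]
  rw [Fin.card_filter_val_lt, min_eq_right hq]

theorem card_corona_path_cycle_adj_pairs_coronaZeroSet {q r : ℕ} (hq : q < n) (hrm : r < m)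
    (hm : 3 ≤ m) :
    #{p : (Fin n ⊕ Fin n × Fin m) × (Fin n ⊕ Fin n × Fin m) |
        (corona (pathGraph n) (cycleGraph m)).Adj p.1 p.2 ∧
          p.1 ∈ coronaZeroSet q r ∧ p.2 ∈ coronaZeroSet q r} =
      2 * q + 2 * (q * m + r) + (q * (2 * m) + 2 * (r - 1)) := by
  rw [card_corona_adj_pairs]
  refine congrArg₂ (· + ·) (congrArg₂ (· + ·) ?_ (congrArg (2 * ·) ?_)) ?_
  · simp only [inl_mem_coronaZeroSet]
    rw [card_pathGraph_adj_pairs_lt (by omega), Nat.add_sub_cancel]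
  · rw [← card_inr_mem_coronaZeroSet hq hrm.le]
    congr 1
    refine filter_congr fun w _ => ?_
    simp only [inl_mem_coronaZeroSet, inr_mem_coronaZeroSet]
    omega
  · refine Fin.sum_eq_of_lt_of_eq_of_gt hq _ (fun i hi => ?_) ?_ (fun i hi => ?_)
    · simp only [inr_mem_coronaZeroSet, hi, true_or, and_true]
      exact card_cycleGraph_adj_pairs hm
    · simp only [inr_mem_coronaZeroSet, lt_irrefl, false_or, true_and]
      exact card_cycleGraph_adj_pairs_lt hrm
    · simp only [card_eq_zero, filter_eq_empty_iff]
      intro x _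
      simp only [inr_mem_coronaZeroSet]
      omega

theorem card_edgeFinset_corona_path_cycle (hm : 3 ≤ m) :
    #(corona (pathGraph n) (cycleGraph m)).edgeFinset = n - 1 + 2 * (n * m) := by
  have h := two_mul_card_edgeFinset_sym2_eq_card_adj_pairs (corona (pathGraph n) (cycleGraph m))
    Set.univ
  rw [card_corona_adj_pairs] at h
  simp only [Set.sym2_univ, Set.mem_univ, filter_true, and_self, and_true, card_univ,
    Fintype.card_prod, Fintype.card_fin, sum_const, smul_eq_mul] at h
  rw [card_pathGraph_adj_pairs, card_cycleGraph_adj_pairs hm, mul_left_comm n 2 m] at h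
  omega

end CoronaPathCycle

theorem corona_path_cycle_odd_even_counts_general (n m : ℕ) (hno : Odd n)
    (hm : 4 ≤ m) (hme : Even m) :
    ∃ f : Sym2 (Fin n ⊕ Fin n × Fin m) → ℕ,
      (∀ e ∈ (corona (pathGraph n) (cycleGraph m)).edgeSet, f e = 0 ∨ f e = 1) ∧
      eCount (corona (pathGraph n) (cycleGraph m)) f 0 = (2 * n * m + n - 3) / 2 ∧
      eCount (corona (pathGraph n) (cycleGraph m)) f 1 = (2 * n * m + n + 1) / 2 ∧
      vCount (corona (pathGraph n) (cycleGraph m)) f 0 = (n + n * m + 1) / 2 ∧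
      vCount (corona (pathGraph n) (cycleGraph m)) f 1 = (n + n * m - 1) / 2 ∧
      |((vCount (corona (pathGraph n) (cycleGraph m)) f 0 : ℤ) +
          (eCount (corona (pathGraph n) (cycleGraph m)) f 0 : ℤ)) -
        ((vCount (corona (pathGraph n) (cycleGraph m)) f 1 : ℤ) +
          (eCount (corona (pathGraph n) (cycleGraph m)) f 1 : ℤ))| ≤ 1 := by
  obtain ⟨q, rfl⟩ := hno
  obtain ⟨r, rfl⟩ := hme
  set G := corona (pathGraph (2 * q + 1)) (cycleGraph (r + r))
  set f := insideLabeling (coronaZeroSet (n := 2 * q + 1) (m := r + r) q r)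
  have hf : ∀ e ∈ G.edgeSet, f e = 0 ∨ f e = 1 := fun e _ => insideLabeling_eq_zero_or_one _ e
  have he0 : 2 * eCount G f 0 =
      2 * q + 2 * (q * (r + r) + r) + (q * (2 * (r + r)) + 2 * (r - 1)) := by
    rw [eCount_insideLabeling_zero, two_mul_card_edgeFinset_sym2_eq_card_adj_pairs,
      card_corona_path_cycle_adj_pairs_coronaZeroSet (by omega) (by omega) (by omega)]
  have he : eCount G f 0 + eCount G f 1 = 2 * q + 2 * ((2 * q + 1) * (r + r)) := by
    rw [eCount_zero_add_eCount_one G hf, card_edgeFinset_corona_path_cycle (by omega)]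
    omega
  have hv0 : vCount G f 0 = q + 1 + (q * (r + r) + r) := by
    rw [vCount_insideLabeling_zero G (exists_adj_of_mem_coronaZeroSet (by omega) (by omega) _ _),
      card_coronaZeroSet (by omega) (by omega)]
  have hv : vCount G f 0 + vCount G f 1 = 2 * q + 1 + (2 * q + 1) * (r + r) := by
    rw [vCount_zero_add_vCount_one G hf]
    simp
  -- `omega` treats `q * r` as an atom; these identities make all counts linear in it.
  have h1 : q * (r + r) = 2 * (q * r) := by ring
  have h2 : q * (2 * (r + r)) = 4 * (q * r) := by ring
  have h3 : (2 * q + 1) * (r + r) = 4 * (q * r) + 2 * r := by ring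
  have h4 : 2 * (2 * q + 1) * (r + r) = 8 * (q * r) + 4 * r := by ring
  refine ⟨f, hf, ?_, ?_, ?_, ?_, abs_le.2 ?_⟩ <;> omega

/-- For odd `n ≥ 3` and even `m ≥ 4`, the corona graph `P_n ∘ C_m` admits an
edge labeling with `e_f(0) = (2nm + n - 3)/2`, `e_f(1) = (2nm + n + 1)/2`,
`v_f(0) = (n + nm + 1)/2`, `v_f(1) = (n + nm - 1)/2`; in particular it is total edge
product cordial. -/
theorem corona_path_cycle_odd_even_counts (n m : ℕ) (hn : 3 ≤ n) (hno : Odd n)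
    (hm : 4 ≤ m) (hme : Even m) :
    ∃ f : Sym2 (Fin n ⊕ Fin n × Fin m) → ℕ,
      (∀ e ∈ (corona (pathGraph n) (cycleGraph m)).edgeSet, f e = 0 ∨ f e = 1) ∧
      eCount (corona (pathGraph n) (cycleGraph m)) f 0 = (2 * n * m + n - 3) / 2 ∧
      eCount (corona (pathGraph n) (cycleGraph m)) f 1 = (2 * n * m + n + 1) / 2 ∧
      vCount (corona (pathGraph n) (cycleGraph m)) f 0 = (n + n * m + 1) / 2 ∧
      vCount (corona (pathGraph n) (cycleGraph m)) f 1 = (n + n * m - 1) / 2 ∧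
      |((vCount (corona (pathGraph n) (cycleGraph m)) f 0 : ℤ) +
          (eCount (corona (pathGraph n) (cycleGraph m)) f 0 : ℤ)) -
        ((vCount (corona (pathGraph n) (cycleGraph m)) f 1 : ℤ) +
          (eCount (corona (pathGraph n) (cycleGraph m)) f 1 : ℤ))| ≤ 1 :=
  corona_path_cycle_odd_even_counts_general n m hno hm hme
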